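/- arXiv:1911.00929 — 4 statements merged into one kernel-verified Lean document; each statement's English description precedes it below -/
import Mathlib

section
/- (Brouwer's Theorem) Every nonempty compact, metrizable, totally disconnected, and perfect topological space is homeomorphic to the middle-thirds Cantor set. Equivalently, any two nonempty compact, metrizable, totally disconnected, perfect topological spaces are homeomorphic. -/
/-!
A sequence of clopen sets `C n` in a compact space `X` codes each point `p` by the bits
`p ∈ C n`. The code map `X → (ℕ → Bool)` is continuous; it is injective when the `C n`
separate points, and surjective when every finite pattern of bits is realised, since its
range is compact and hence closed. So it suffices to build such a sequence.

Enumerate the clopen sets as `B 0, B 1, …` (there are countably many, by second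
countability). The sets `C 0, …, C (k-1)` cut `X` into finitely many nonempty clopen cells;
`C k` cuts each cell `A` in two, along `B k` if `B k` splits `A`, and otherwise along any
clopen set splitting `A`, which exists because `A` has two distinct points (`X` is perfect)
that a clopen set separates (`X` is totally disconnected). Every cell being split keeps all
finite patterns realised, and two points that agree on `C 0, …, C k` are not separated
by `B k`.
-/

open Set Filter Topology TopologicalSpace

section ClopenCode

variable {X : Type*}

noncomputable def clopenCode (C : ℕ → Set X) (p : X) : ℕ → Bool :=
  fun n => (C n).boolIndicator p

theorem clopenCode_apply_eq_iff (C : ℕ → Set X) (p : X) (n : ℕ) (b : Bool) :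
    clopenCode C p n = b ↔ (p ∈ C n ↔ b = true) := by
  cases b <;> simp [clopenCode, Set.mem_iff_boolIndicator]

theorem injective_clopenCode {C : ℕ → Set X}
    (hsep : ∀ p q : X, (∀ n, p ∈ C n ↔ q ∈ C n) → p = q) :
    Function.Injective (clopenCode C) := fun p q h =>
  hsep p q fun n =>
    ((clopenCode_apply_eq_iff C p n _).1 (congrFun h n)).trans ((C n).mem_iff_boolIndicator q).symm

variable [TopologicalSpace X]

theorem continuous_clopenCode {C : ℕ → Set X} (hC : ∀ n, IsClopen (C n)) :
    Continuous (clopenCode C) :=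
  continuous_pi fun n => (continuous_boolIndicator_iff_isClopen _).2 (hC n)

theorem surjective_clopenCode [CompactSpace X] {C : ℕ → Set X} (hC : ∀ n, IsClopen (C n))
    (hind : ∀ (x : ℕ → Bool) (N : ℕ), ∃ p, ∀ n < N, (p ∈ C n ↔ x n = true)) :
    Function.Surjective (clopenCode C) := by
  intro x
  choose p hp using hind x
  have hlim : Tendsto (fun N => clopenCode C (p N)) atTop (𝓝 x) :=
    tendsto_pi_nhds.2 fun n => tendsto_const_nhds.congr' <|
      (eventually_gt_atTop n).mono fun N hN => ((clopenCode_apply_eq_iff ..).2 (hp N n hN)).symm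
  exact (isCompact_range (continuous_clopenCode hC)).isClosed.closure_subset
    (mem_closure_of_tendsto hlim (Eventually.of_forall fun N => mem_range_self _))

theorem nonempty_homeomorph_nat_bool_of_isClopen [CompactSpace X] {C : ℕ → Set X}
    (hC : ∀ n, IsClopen (C n)) (hsep : ∀ p q : X, (∀ n, p ∈ C n ↔ q ∈ C n) → p = q)
    (hind : ∀ (x : ℕ → Bool) (N : ℕ), ∃ p, ∀ n < N, (p ∈ C n ↔ x n = true)) :
    Nonempty (X ≃ₜ (ℕ → Bool)) :=
  ⟨(continuous_clopenCode hC).homeoOfEquivCompactToT2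
    (f := .ofBijective _ ⟨injective_clopenCode hsep, surjective_clopenCode hC hind⟩)⟩

end ClopenCode

namespace Brouwer

variable {X : Type*}

def cell (C : ℕ → Set X) (k : ℕ) (p : X) : Set X := {q | ∀ j < k, q ∈ C j ↔ p ∈ C j}

theorem mem_cell_self (C : ℕ → Set X) (k : ℕ) (p : X) : p ∈ cell C k p := fun _ _ => Iff.rfl

theorem cell_eq_of_mem {C : ℕ → Set X} {k : ℕ} {p q : X} (hq : q ∈ cell C k p) :
    cell C k q = cell C k p :=
  ext fun _ => forall₂_congr fun j hj => iff_congr Iff.rfl (hq j hj)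

variable [TopologicalSpace X]

theorem isOpen_cell {C : ℕ → Set X} {k : ℕ} (hC : ∀ j < k, IsClopen (C j)) (p : X) :
    IsOpen (cell C k p) := by
  have : cell C k p = ⋂ j ∈ Iio k, {q | q ∈ C j ↔ p ∈ C j} := by ext; simp [cell]
  rw [this]
  refine (finite_Iio k).isOpen_biInter fun j hj => ?_
  by_cases hp : p ∈ C j
  · simp only [hp, iff_true]
    exact (hC j hj).isOpen
  · simp only [hp, iff_false]
    exact (hC j hj).compl.isOpen

def IsCut (A B V : Set X) : Prop :=
  IsClopen V ∧ (A ∩ V).Nonempty ∧ (A \ V).Nonempty ∧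
    ((A ∩ B).Nonempty → (A \ B).Nonempty → V = B)

theorem exists_isCut [TotallySeparatedSpace X] [PerfectSpace X] {A : Set X} (hA : IsOpen A)
    (hne : A.Nonempty) {B : Set X} (hB : IsClopen B) : ∃ V, IsCut A B V := by
  by_cases hAB : (A ∩ B).Nonempty ∧ (A \ B).Nonempty
  · exact ⟨B, hB, hAB.1, hAB.2, fun _ _ => rfl⟩
  obtain ⟨x, hx⟩ := hne
  obtain ⟨y, ⟨hyA, -⟩, hyx⟩ :=
    preperfect_iff_nhds.mp PerfectSpace.univ_preperfect x (mem_univ x) A (hA.mem_nhds hx)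
  obtain ⟨V, hV, hxV, hyV⟩ := exists_isClopen_of_totally_separated hyx.symm
  exact ⟨V, hV, ⟨x, hx, hxV⟩, ⟨y, hyA, hyV⟩, fun h1 h2 => absurd ⟨h1, h2⟩ hAB⟩

noncomputable def cut (A B : Set X) : Set X := Classical.epsilon (IsCut A B)

-- The `if` only exposes `j < k` to the termination checker; `mem_cutSeq` removes it.
noncomputable def cutSeq (B : ℕ → Set X) : ℕ → Set X
  | k => {p | p ∈ cut (cell (fun j => if j < k then cutSeq B j else ∅) k p) (B k)}

theorem mem_cutSeq (B : ℕ → Set X) (k : ℕ) (p : X) :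
    p ∈ cutSeq B k ↔ p ∈ cut (cell (cutSeq B) k p) (B k) := by
  rw [cutSeq]
  have : cell (fun j => if j < k then cutSeq B j else ∅) k p = cell (cutSeq B) k p :=
    ext fun q => forall₂_congr fun j hj => by simp only [if_pos hj]
  rw [mem_ofPred_eq, this]

theorem mem_cutSeq_iff_of_mem_cell {B : ℕ → Set X} {k : ℕ} {p q : X}
    (hq : q ∈ cell (cutSeq B) k p) :
    q ∈ cutSeq B k ↔ q ∈ cut (cell (cutSeq B) k p) (B k) := by
  rw [mem_cutSeq, cell_eq_of_mem hq]

variable [TotallySeparatedSpace X] [PerfectSpace X] {B : ℕ → Set X}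

theorem isCut_cut_cell {k : ℕ} (hC : ∀ j < k, IsClopen (cutSeq B j)) (hB : IsClopen (B k))
    (p : X) : IsCut (cell (cutSeq B) k p) (B k) (cut (cell (cutSeq B) k p) (B k)) :=
  Classical.epsilon_spec (exists_isCut (isOpen_cell hC p) ⟨p, mem_cell_self _ _ _⟩ hB)

theorem isClopen_cutSeq (hB : ∀ k, IsClopen (B k)) (k : ℕ) : IsClopen (cutSeq B k) := by
  induction k using Nat.strong_induction_on with
  | _ k ih =>
    -- on the open cell of `p`, `cutSeq B k` coincides with the clopen set `cut (cell …) (B k)`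
    have hcell : ∀ p, IsOpen (cell (cutSeq B) k p) := isOpen_cell ih
    have hcut : ∀ p, IsClopen (cut (cell (cutSeq B) k p) (B k)) := fun p =>
      (isCut_cut_cell ih (hB k) p).1
    refine ⟨isOpen_compl_iff.1 <| isOpen_iff_forall_mem_open.2 fun p hp => ?_,
      isOpen_iff_forall_mem_open.2 fun p hp => ?_⟩
    · exact ⟨cell (cutSeq B) k p ∩ (cut (cell (cutSeq B) k p) (B k))ᶜ,
        fun q hq => (mem_cutSeq_iff_of_mem_cell hq.1).not.2 hq.2,
        (hcell p).inter (hcut p).compl.isOpen,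
        mem_cell_self _ _ _, (mem_cutSeq_iff_of_mem_cell (mem_cell_self _ _ _)).not.1 hp⟩
    · exact ⟨cell (cutSeq B) k p ∩ cut (cell (cutSeq B) k p) (B k),
        fun q hq => (mem_cutSeq_iff_of_mem_cell hq.1).2 hq.2,
        (hcell p).inter (hcut p).isOpen,
        mem_cell_self _ _ _, (mem_cutSeq_iff_of_mem_cell (mem_cell_self _ _ _)).1 hp⟩

theorem exists_forall_mem_cutSeq_iff [Nonempty X] (hB : ∀ k, IsClopen (B k)) (x : ℕ → Bool)
    (N : ℕ) : ∃ p, ∀ n < N, (p ∈ cutSeq B n ↔ x n = true) := by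
  induction N with
  | zero => exact ⟨Classical.arbitrary X, fun n hn => absurd hn n.not_lt_zero⟩
  | succ N ih =>
    obtain ⟨p, hp⟩ := ih
    set A := cell (cutSeq B) N p
    obtain ⟨-, hin, hout, -⟩ := isCut_cut_cell (fun j _ => isClopen_cutSeq hB j) (hB N) p
    obtain ⟨q, hqA, hqN⟩ : ∃ q ∈ A, (q ∈ cut A (B N) ↔ x N = true) := by
      cases x N
      · obtain ⟨q, hq⟩ := hout
        exact ⟨q, hq.1, by simpa using hq.2⟩
      · obtain ⟨q, hq⟩ := hin
        exact ⟨q, hq.1, by simpa using hq.2⟩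
    refine ⟨q, fun n hn => ?_⟩
    rcases Nat.lt_succ_iff_lt_or_eq.1 hn with hn | rfl
    · exact (hqA n hn).trans (hp n hn)
    · exact (mem_cutSeq_iff_of_mem_cell hqA).trans hqN

theorem eq_of_forall_mem_cutSeq_iff (hB : ∀ k, IsClopen (B k))
    (hsep : ∀ p q : X, p ≠ q → ∃ k, p ∈ B k ∧ q ∉ B k) {p q : X}
    (h : ∀ n, p ∈ cutSeq B n ↔ q ∈ cutSeq B n) : p = q := by
  by_contra hpq
  obtain ⟨k, hpB, hqB⟩ := hsep p q hpq
  have hq : q ∈ cell (cutSeq B) k p := fun j _ => (h j).symm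
  obtain ⟨-, -, -, hcut⟩ := isCut_cut_cell (fun j _ => isClopen_cutSeq hB j) (hB k) p
  have hcut_eq := hcut ⟨p, mem_cell_self _ _ _, hpB⟩ ⟨q, hq, hqB⟩
  have hpq_cut := (mem_cutSeq_iff_of_mem_cell (mem_cell_self _ _ _)).symm.trans
    ((h k).trans (mem_cutSeq_iff_of_mem_cell hq))
  rw [hcut_eq] at hpq_cut
  exact hqB (hpq_cut.1 hpB)

end Brouwer

theorem nonempty_homeomorph_nat_bool (X : Type*) [TopologicalSpace X] [Nonempty X]
    [CompactSpace X] [T2Space X] [SecondCountableTopology X] [TotallyDisconnectedSpace X]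
    [PerfectSpace X] : Nonempty (X ≃ₜ (ℕ → Bool)) := by
  have : Countable (Clopens X) := Clopens.countable_iff_secondCountable.2 inferInstance
  obtain ⟨B, hB⟩ := exists_surjective_nat (Clopens X)
  have hsep : ∀ p q : X, p ≠ q → ∃ k, p ∈ (B k : Set X) ∧ q ∉ (B k : Set X) := by
    intro p q hpq
    obtain ⟨U, hU, hpU, hqU⟩ := exists_isClopen_of_totally_separated hpq
    obtain ⟨k, hk⟩ := hB ⟨U, hU⟩
    exact ⟨k, by simpa [hk] using hpU, by simpa [hk] using hqU⟩
  have hBc : ∀ k, IsClopen (B k : Set X) := fun k => (B k).isClopen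
  exact nonempty_homeomorph_nat_bool_of_isClopen (Brouwer.isClopen_cutSeq hBc)
    (fun p q => Brouwer.eq_of_forall_mem_cutSeq_iff hBc hsep)
    (Brouwer.exists_forall_mem_cutSeq_iff hBc)

/-- **Brouwer's Theorem.** Every nonempty compact, metrizable, totally disconnected and
perfect topological space is homeomorphic to the middle-thirds Cantor set. -/
theorem brouwer_homeomorph_cantorSet (X : Type*) [TopologicalSpace X] [Nonempty X]
    [CompactSpace X] [TopologicalSpace.MetrizableSpace X] [TotallyDisconnectedSpace X]
    [PerfectSpace X] :
    Nonempty (X ≃ₜ ↥cantorSet) :=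
  let ⟨e⟩ := nonempty_homeomorph_nat_bool X
  ⟨e.trans cantorSetHomeomorphNatToBool.symm⟩
end

section
/- Let p be a prime and let S be a finite nontrivial subtree of the complete p-ary tree T_p that is a tile of some tiling of T_p, i.e., there exists a set Ω of words such that every edge of T_p is, in a unique way, the translate by an element of Ω of an edge of S. Then S contains the empty word (S is rooted at ε) and S is closed under prefixes: if v ∈ S and w is a prefix of v, then w ∈ S. -/
/-- `S` is a tile of a tiling of the complete `p`-ary tree with translate set `Ω`:
every edge `(w, w ++ [c])` of the tree can be written uniquely as
`(ω ++ v, ω ++ v ++ [c])` with `ω ∈ Ω`, `v ∈ S` and `v ++ [c] ∈ S`. -/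
def IsTile (p : ℕ) (S Ω : Set (List (Fin p))) : Prop :=
  ∀ (w : List (Fin p)) (c : Fin p),
    ∃! ωv : List (Fin p) × List (Fin p),
      ωv.1 ∈ Ω ∧ ωv.2 ∈ S ∧ ωv.2 ++ [c] ∈ S ∧ w = ωv.1 ++ ωv.2

/-- Two words are adjacent vertices of the subtree induced by `S` if both lie in `S`
and one is obtained from the other by appending a single character. -/
def AdjIn (p : ℕ) (S : Set (List (Fin p))) (a b : List (Fin p)) : Prop :=
  a ∈ S ∧ b ∈ S ∧ ((∃ c : Fin p, b = a ++ [c]) ∨ (∃ c : Fin p, a = b ++ [c]))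

/-!
The tile contains `[]`: the edge `([], [c])` is some `ω ++ v` with `v ∈ S`, forcing `v = []`.
Prefix closure then propagates from `[]` along any path in `S`: stepping up to `a ++ [c]` adds
only the new vertex itself as a prefix, and stepping down to a parent keeps a subset of the
prefixes.
-/

theorem IsTile.nil_mem {p : ℕ} {S Ω : Set (List (Fin p))} (htile : IsTile p S Ω) (c : Fin p) :
    ([] : List (Fin p)) ∈ S := by
  obtain ⟨⟨ω, v⟩, ⟨-, hv, -, hnil⟩, -⟩ := htile [] c
  rwa [(List.append_eq_nil_iff.mp hnil.symm).2] at hv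

theorem prefix_mem_of_reflTransGen_adjIn {p : ℕ} {S : Set (List (Fin p))} {u v : List (Fin p)}
    (hpath : Relation.ReflTransGen (AdjIn p S) u v) (hu : ∀ w, w <+: u → w ∈ S) :
    ∀ w, w <+: v → w ∈ S := by
  induction hpath with
  | refl => exact hu
  | tail _ hadj ih =>
    obtain ⟨-, hb, ⟨c, rfl⟩ | ⟨c, rfl⟩⟩ := hadj
    · intro w hw
      rcases List.prefix_concat_iff.mp hw with rfl | hw
      · exact hb
      · exact ih w hw
    · exact fun w hw => ih w (hw.trans (List.prefix_append _ [c]))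

theorem tile_contains_root_and_prefix_closed_general (p : ℕ) [Fact p.Prime]
    (S : Set (List (Fin p)))
    (hconn : ∀ v ∈ S, ∀ w ∈ S, Relation.ReflTransGen (AdjIn p S) v w)
    (Ω : Set (List (Fin p))) (htile : IsTile p S Ω) :
    ([] : List (Fin p)) ∈ S ∧ ∀ v ∈ S, ∀ w : List (Fin p), w <+: v → w ∈ S := by
  have hnil : ([] : List (Fin p)) ∈ S := htile.nil_mem ⟨0, (Fact.out : p.Prime).pos⟩
  refine ⟨hnil, fun v hv => prefix_mem_of_reflTransGen_adjIn (hconn [] hnil v hv) ?_⟩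
  intro w hw
  rwa [List.prefix_nil.mp hw]

/-- A tile of a tiling of the complete `p`-ary tree (a nontrivial finite connected
subtree) is rooted at the empty word and closed under prefixes. -/
theorem tile_contains_root_and_prefix_closed (p : ℕ) [Fact p.Prime]
    (S : Set (List (Fin p))) (hfin : S.Finite)
    (hconn : ∀ v ∈ S, ∀ w ∈ S, Relation.ReflTransGen (AdjIn p S) v w)
    (hnontriv : ∃ v ∈ S, ∃ w ∈ S, v ≠ w)
    (Ω : Set (List (Fin p))) (htile : IsTile p S Ω) :
    ([] : List (Fin p)) ∈ S ∧ ∀ v ∈ S, ∀ w : List (Fin p), w <+: v → w ∈ S :=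
  tile_contains_root_and_prefix_closed_general p S hconn Ω htile
end

section
/- Let p be a prime and let S be a nontrivial finite set of words over {0, …, p−1} that contains the empty word and is closed under prefixes (a nontrivial finite subtree of T_p rooted at ε). Then the following are equivalent: (a) the p-adic balls {B_ℓ : ℓ ∈ L(S)} corresponding to the leaves of S form a partition of ℤ_p; (b) for every word w there is a leaf ℓ ∈ L(S) such that w is a prefix of ℓ or ℓ is a prefix of w; (c) for every word w, either w ∈ S \ L(S) or there is a leaf ℓ ∈ L(S) that is a prefix of w; (d) for every word w, either w ∈ S or there is a leaf ℓ ∈ L(S) that is a prefix of w. -/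
/-- `ν(w) = Σ_{k<n} a_k p^k` for a word `w = [a₀, …, a_{n-1}]` over `{0, …, p-1}`. -/
def wordVal (p : ℕ) (w : List (Fin p)) : ℕ :=
  w.foldr (fun a acc => a.val + p * acc) 0

/-- The `p`-adic ball `B_w = {x ∈ ℤ_p : ‖x − ν(w)‖ ≤ p^{−n}}` associated to a word `w`
of length `n`. -/
def padicBall (p : ℕ) [Fact p.Prime] (w : List (Fin p)) : Set ℤ_[p] :=
  {x : ℤ_[p] | ‖x - (wordVal p w : ℤ_[p])‖ ≤ (p : ℝ) ^ (-(w.length : ℤ))}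

/-- The leaves of a set `S` of words: elements of `S` none of whose children lies
in `S`. -/
def leaves (p : ℕ) (S : Set (List (Fin p))) : Set (List (Fin p)) :=
  {s ∈ S | ∀ c : Fin p, s ++ [c] ∉ S}

/-- The balls indexed by the words of `W` form a partition of `ℤ_p`: they are nonempty,
pairwise disjoint and cover `ℤ_p`. -/
def IsBallPartition (p : ℕ) [Fact p.Prime] (W : Set (List (Fin p))) : Prop :=
  (∀ w ∈ W, (padicBall p w).Nonempty) ∧
  (∀ v ∈ W, ∀ w ∈ W, v ≠ w → Disjoint (padicBall p v) (padicBall p w)) ∧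
  (⋃ w ∈ W, padicBall p w) = Set.univ

/-!
A word `w` of length `n` is the base-`p` expansion of `ν(w) < p ^ n`, and `B_w` is the fibre
over `ν(w)` of the reduction `ℤ_p → ℤ/p^n`. Hence every point lies in exactly one ball of
each length, and two balls meet only if one word is a prefix of the other, in which case the
balls are nested. For a prefix-closed `S`, the leaf balls are thus pairwise disjoint, and they
cover `ℤ_p` exactly when every word not in `S` (in particular every word longer than all of
`S`) extends a leaf.
-/

section Words

variable {p : ℕ}

lemma wordVal_cons (a : Fin p) (w : List (Fin p)) : wordVal p (a :: w) = a + p * wordVal p w :=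
  rfl

lemma wordVal_eq_ofDigits (w : List (Fin p)) : wordVal p w = Nat.ofDigits p (w.map Fin.val) := by
  induction w with
  | nil => rfl
  | cons a w ih => simp [wordVal, Nat.ofDigits_cons, ← ih]

lemma wordVal_lt_pow (hp : 1 < p) (w : List (Fin p)) : wordVal p w < p ^ w.length := by
  simpa [wordVal_eq_ofDigits] using
    Nat.ofDigits_lt_base_pow_length hp (l := w.map Fin.val) (by simp)

lemma wordVal_take (w : List (Fin p)) (n : ℕ) :
    wordVal p (w.take n) = wordVal p w % p ^ n := by
  rcases Nat.eq_zero_or_pos p with rfl | hp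
  · cases w with
    | nil => simp [wordVal]
    | cons a _ => exact a.elim0
  rw [wordVal_eq_ofDigits, wordVal_eq_ofDigits,
    Nat.ofDigits_mod_pow_eq_ofDigits_take n hp _ (by simp), List.map_take]

lemma eq_of_wordVal_eq (hp : 1 < p) {v w : List (Fin p)} (hlen : v.length = w.length)
    (h : wordVal p v = wordVal p w) : v = w := by
  rw [wordVal_eq_ofDigits, wordVal_eq_ofDigits] at h
  exact List.map_injective_iff.mpr Fin.val_injective <|
    Nat.ofDigits_inj_of_len_eq hp (by simpa) (by simp) (by simp) h

lemma exists_length_eq_wordVal_eq (hp : 0 < p) :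
    ∀ (n m : ℕ), m < p ^ n → ∃ w : List (Fin p), w.length = n ∧ wordVal p w = m
  | 0, m, hm => ⟨[], rfl, by rw [pow_zero, Nat.lt_one_iff] at hm; exact hm.symm⟩
  | n + 1, m, hm => by
    obtain ⟨w, hlen, hw⟩ :=
      exists_length_eq_wordVal_eq hp n (m / p) (Nat.div_lt_of_lt_mul (by rwa [← pow_succ']))
    exact ⟨⟨m % p, Nat.mod_lt m hp⟩ :: w, by simp [hlen],
      by rw [wordVal_cons, hw, Nat.mod_add_div]⟩

end Words

section Balls

variable {p : ℕ} [Fact p.Prime]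

lemma mem_padicBall_iff_toZModPow (w : List (Fin p)) (x : ℤ_[p]) :
    x ∈ padicBall p w ↔ PadicInt.toZModPow w.length x = wordVal p w := by
  rw [padicBall, Set.mem_ofPred_eq, PadicInt.norm_le_pow_iff_mem_span_pow,
    ← PadicInt.ker_toZModPow, RingHom.mem_ker, map_sub, map_natCast, sub_eq_zero]

lemma wordVal_mem_padicBall (w : List (Fin p)) : (wordVal p w : ℤ_[p]) ∈ padicBall p w := by
  rw [mem_padicBall_iff_toZModPow, map_natCast]

lemma padicBall_subset_of_prefix {v w : List (Fin p)} (h : v <+: w) :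
    padicBall p w ⊆ padicBall p v := by
  intro x hx
  rw [mem_padicBall_iff_toZModPow] at hx ⊢
  rw [← PadicInt.cast_toZModPow _ _ h.length_le, hx,
    ZMod.cast_natCast (pow_dvd_pow p h.length_le), List.prefix_iff_eq_take.mp h, wordVal_take,
    List.length_take_of_le h.length_le, ← ZMod.natCast_mod]

lemma eq_of_mem_padicBall_of_length_eq {v w : List (Fin p)} {x : ℤ_[p]}
    (hlen : v.length = w.length) (hv : x ∈ padicBall p v) (hw : x ∈ padicBall p w) : v = w := by
  have hp := (Fact.out : p.Prime).one_lt
  rw [mem_padicBall_iff_toZModPow] at hv hw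
  rw [hlen, hw, ZMod.natCast_eq_natCast_iff', Nat.mod_eq_of_lt (wordVal_lt_pow hp w),
    ← hlen, Nat.mod_eq_of_lt (wordVal_lt_pow hp v)] at hv
  exact eq_of_wordVal_eq hp hlen hv.symm

lemma prefix_or_prefix_of_mem_padicBall {v w : List (Fin p)} {x : ℤ_[p]}
    (hv : x ∈ padicBall p v) (hw : x ∈ padicBall p w) : v <+: w ∨ w <+: v := by
  wlog hle : v.length ≤ w.length generalizing v w
  · exact (this hw hv (le_of_not_ge hle)).symm
  have htake : x ∈ padicBall p (w.take v.length) :=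
    padicBall_subset_of_prefix (List.take_prefix _ w) hw
  left
  rw [eq_of_mem_padicBall_of_length_eq (List.length_take_of_le hle).symm hv htake]
  exact List.take_prefix _ w

lemma exists_length_eq_mem_padicBall (n : ℕ) (x : ℤ_[p]) :
    ∃ w : List (Fin p), w.length = n ∧ x ∈ padicBall p w := by
  have hp := (Fact.out : p.Prime).pos
  obtain ⟨w, hlen, hw⟩ := exists_length_eq_wordVal_eq hp n _ (PadicInt.toZModPow n x).val_lt
  refine ⟨w, hlen, ?_⟩
  rw [mem_padicBall_iff_toZModPow, hw, hlen, ZMod.natCast_zmod_val]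

end Balls

section Leaves

variable {p : ℕ} {S : Set (List (Fin p))}

lemma eq_of_mem_leaves_of_prefix (hpref : ∀ v ∈ S, ∀ w : List (Fin p), w <+: v → w ∈ S)
    {ℓ w : List (Fin p)} (hℓ : ℓ ∈ leaves p S) (hw : w ∈ S) (h : ℓ <+: w) : w = ℓ := by
  obtain ⟨t, rfl⟩ := h
  cases t with
  | nil => simp
  | cons c t => exact absurd (hpref _ hw (ℓ ++ [c]) ⟨t, by simp⟩) (hℓ.2 c)

lemma disjoint_padicBall_of_mem_leaves [Fact p.Prime]
    (hpref : ∀ v ∈ S, ∀ w : List (Fin p), w <+: v → w ∈ S)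
    {v w : List (Fin p)} (hv : v ∈ leaves p S) (hw : w ∈ leaves p S) (hne : v ≠ w) :
    Disjoint (padicBall p v) (padicBall p w) := by
  refine Set.disjoint_left.mpr fun x hxv hxw => hne ?_
  rcases prefix_or_prefix_of_mem_padicBall hxv hxw with h | h
  · exact (eq_of_mem_leaves_of_prefix hpref hv hw.1 h).symm
  · exact eq_of_mem_leaves_of_prefix hpref hw hv.1 h

lemma iUnion_padicBall_leaves_eq_univ [Fact p.Prime] (hfin : S.Finite)
    (hext : ∀ w : List (Fin p), w ∈ S ∨ ∃ ℓ ∈ leaves p S, ℓ <+: w) :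
    (⋃ ℓ ∈ leaves p S, padicBall p ℓ) = Set.univ := by
  refine Set.eq_univ_of_forall fun x => ?_
  obtain ⟨N, hN⟩ := (hfin.image List.length).bddAbove
  obtain ⟨w, hlen, hxw⟩ := exists_length_eq_mem_padicBall (N + 1) x
  have hwS : w ∉ S := fun hwS => by
    have := hN (Set.mem_image_of_mem _ hwS)
    omega
  obtain ⟨ℓ, hℓ, hℓw⟩ := (hext w).resolve_left hwS
  exact Set.mem_biUnion hℓ (padicBall_subset_of_prefix hℓw hxw)

end Leaves

theorem leaves_cover_equivalences_general (p : ℕ) [Fact p.Prime]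
    (S : Set (List (Fin p))) (hfin : S.Finite)
    (hpref : ∀ v ∈ S, ∀ w : List (Fin p), w <+: v → w ∈ S) :
    [ IsBallPartition p (leaves p S),
      ∀ w : List (Fin p), ∃ ℓ ∈ leaves p S, w <+: ℓ ∨ ℓ <+: w,
      ∀ w : List (Fin p), w ∈ S \ leaves p S ∨ ∃ ℓ ∈ leaves p S, ℓ <+: w,
      ∀ w : List (Fin p), w ∈ S ∨ ∃ ℓ ∈ leaves p S, ℓ <+: w ].TFAE := by
  tfae_have 1 → 2 := by
    rintro ⟨-, -, hcover⟩ w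
    have hmem : (wordVal p w : ℤ_[p]) ∈ ⋃ ℓ ∈ leaves p S, padicBall p ℓ := hcover ▸ trivial
    obtain ⟨ℓ, hℓ, hxℓ⟩ := Set.mem_iUnion₂.mp hmem
    exact ⟨ℓ, hℓ, prefix_or_prefix_of_mem_padicBall (wordVal_mem_padicBall w) hxℓ⟩
  tfae_have 2 → 3 := by
    intro h2 w
    obtain ⟨ℓ, hℓ, hwℓ | hℓw⟩ := h2 w
    · by_cases hwleaf : w ∈ leaves p S
      · exact .inr ⟨w, hwleaf, List.prefix_refl w⟩
      · exact .inl ⟨hpref ℓ hℓ.1 w hwℓ, hwleaf⟩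
    · exact .inr ⟨ℓ, hℓ, hℓw⟩
  tfae_have 3 → 4 := fun h3 w => (h3 w).imp_left And.left
  tfae_have 4 → 1 := fun h4 =>
    ⟨fun w _ => ⟨_, wordVal_mem_padicBall w⟩,
      fun _ hv _ hw hne => disjoint_padicBall_of_mem_leaves hpref hv hw hne,
      iUnion_padicBall_leaves_eq_univ hfin h4⟩
  tfae_finish

/-- For a nontrivial finite subtree `S` of the `p`-ary tree rooted at the empty word, the
following are equivalent: (a) the balls of the leaves of `S` partition `ℤ_p`; (b) every
word is comparable (for the prefix order) with some leaf; (c) every word is either a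
non-leaf vertex of `S` or has a leaf of `S` as a prefix; (d) every word is either a
vertex of `S` or has a leaf of `S` as a prefix. -/
theorem leaves_cover_equivalences (p : ℕ) [Fact p.Prime]
    (S : Set (List (Fin p))) (hfin : S.Finite) (hroot : ([] : List (Fin p)) ∈ S)
    (hpref : ∀ v ∈ S, ∀ w : List (Fin p), w <+: v → w ∈ S)
    (hnontriv : ∃ w ∈ S, w ≠ []) :
    [ IsBallPartition p (leaves p S),
      ∀ w : List (Fin p), ∃ ℓ ∈ leaves p S, w <+: ℓ ∨ ℓ <+: w,
      ∀ w : List (Fin p), w ∈ S \ leaves p S ∨ ∃ ℓ ∈ leaves p S, ℓ <+: w,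
      ∀ w : List (Fin p), w ∈ S ∨ ∃ ℓ ∈ leaves p S, ℓ <+: w ].TFAE :=
  leaves_cover_equivalences_general p S hfin hpref
end

section
/- Let p be a prime and let S be a nontrivial finite set of words over {0, …, p−1} containing the empty word and closed under prefixes, and suppose S is a tile of a tiling of T_p with translate set Ω (every edge (w, w ++ [c]) of the complete p-ary tree can be written uniquely as (ω ++ v, ω ++ v ++ [c]) with ω ∈ Ω, v ∈ S, v ++ [c] ∈ S). Then Ω necessarily equals the submonoid of the free monoid of words under concatenation generated by the set of leaves L(S). -/
/-- The submonoid of the free monoid of words generated by the leaves of `S`, viewed as a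
set of words. -/
def leafSubmonoid (p : ℕ) (S : Set (List (Fin p))) : Set (List (Fin p)) :=
  {w : List (Fin p) |
    FreeMonoid.ofList w ∈ Submonoid.closure (FreeMonoid.ofList '' leaves p S)}

/-!
Uniqueness of the decomposition of the edges leaving a translate `ω ∈ Ω` forces them to be
covered by the copy `ω ++ S` itself, so no translate lies strictly inside another copy of the
tile. Hence covering the first edge below `ω ++ ℓ`, for a leaf `ℓ`, requires a new translate
at `ω ++ ℓ`; conversely the last edge above a nonempty translate `ω` ends at a leaf of the copy
covering it, which peels a leaf off `ω` and lets us induct on the length.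
-/

namespace IsTile

variable {p : ℕ} {S Ω : Set (List (Fin p))}

theorem nil_mem_s14 (h : IsTile p S Ω) (c : Fin p) : [] ∈ S := by
  obtain ⟨⟨ω, v⟩, ⟨-, hv, -, hnil⟩, -⟩ := h [] c
  rw [(List.append_eq_nil_iff.mp hnil.symm).2] at hv
  exact hv

theorem singleton_mem (h : IsTile p S Ω) (c : Fin p) : [c] ∈ S := by
  obtain ⟨⟨ω, v⟩, ⟨-, -, hvc, hnil⟩, -⟩ := h [] c
  rw [(List.append_eq_nil_iff.mp hnil.symm).2] at hvc
  exact hvc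

theorem nil_mem_translates [NeZero p] (h : IsTile p S Ω) : [] ∈ Ω := by
  obtain ⟨⟨ω, v⟩, ⟨hω, -, -, hnil⟩, -⟩ := h [] 0
  rw [(List.append_eq_nil_iff.mp hnil.symm).1] at hω
  exact hω

theorem eq_nil_of_append_mem (h : IsTile p S Ω) {ω u : List (Fin p)}
    {c : Fin p} (hω : ω ∈ Ω) (hωu : ω ++ u ∈ Ω) (hu : u ∈ S) (huc : u ++ [c] ∈ S) :
    u = [] := by
  obtain ⟨_, -, huniq⟩ := h (ω ++ u) c
  have hself :=
    huniq (ω ++ u, []) ⟨hωu, h.nil_mem_s14 c, h.singleton_mem c, (List.append_nil _).symm⟩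
  have hcopy := huniq (ω, u) ⟨hω, hu, huc, rfl⟩
  exact (congrArg Prod.snd (hself.trans hcopy.symm)).symm

theorem eq_nil_of_append_append_mem (h : IsTile p S Ω)
    (hpref : ∀ v ∈ S, ∀ w : List (Fin p), w <+: v → w ∈ S) {ω t v : List (Fin p)}
    (hω : ω ∈ Ω) (hωt : ω ++ t ∈ Ω) (htv : t ++ v ∈ S) (hv : v ≠ []) : t = [] := by
  obtain ⟨d, v', rfl⟩ := List.exists_cons_of_ne_nil hv
  exact h.eq_nil_of_append_mem hω hωt (hpref _ htv t (List.prefix_append t _))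
    (hpref _ htv (t ++ [d]) ⟨v', by simp⟩)

theorem eq_of_append_eq_append (h : IsTile p S Ω)
    (hpref : ∀ v ∈ S, ∀ w : List (Fin p), w <+: v → w ∈ S) {ω₁ ω₂ v₁ v₂ : List (Fin p)}
    (hω₁ : ω₁ ∈ Ω) (hω₂ : ω₂ ∈ Ω) (hv₁ : v₁ ∈ S) (hv₂ : v₂ ∈ S) (hv₁ne : v₁ ≠ [])
    (hv₂ne : v₂ ≠ []) (heq : ω₁ ++ v₁ = ω₂ ++ v₂) : ω₁ = ω₂ := by
  rcases List.append_eq_append_iff.mp heq with ⟨t, rfl, rfl⟩ | ⟨t, rfl, rfl⟩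
  · rw [h.eq_nil_of_append_append_mem hpref hω₁ hω₂ hv₁ hv₂ne, List.append_nil]
  · rw [h.eq_nil_of_append_append_mem hpref hω₂ hω₁ hv₂ hv₁ne, List.append_nil]

theorem append_mem_of_mem_leaves [NeZero p] (h : IsTile p S Ω)
    (hpref : ∀ v ∈ S, ∀ w : List (Fin p), w <+: v → w ∈ S) {ω ℓ : List (Fin p)}
    (hω : ω ∈ Ω) (hℓ : ℓ ∈ leaves p S) : ω ++ ℓ ∈ Ω := by
  rcases eq_or_ne ℓ [] with rfl | hℓne
  · rwa [List.append_nil]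
  obtain ⟨⟨ω', v⟩, ⟨hω', hv, hv0, heq⟩, -⟩ := h (ω ++ ℓ) 0
  dsimp only at hω' hv hv0 heq
  rcases eq_or_ne v [] with rfl | hvne
  · rwa [heq, List.append_nil]
  have hωω' := h.eq_of_append_eq_append hpref hω hω' hℓ.1 hv hℓne hvne heq
  rw [hωω', List.append_cancel_left_eq] at heq
  exact absurd (heq ▸ hv0) (hℓ.2 0)

theorem exists_eq_append_leaf (h : IsTile p S Ω) {ω : List (Fin p)}
    (hω : ω ∈ Ω) (hne : ω ≠ []) : ∃ ω' ∈ Ω, ∃ ℓ ∈ leaves p S, ℓ ≠ [] ∧ ω = ω' ++ ℓ := by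
  obtain ⟨w, c, rfl⟩ : ∃ w c, ω = w ++ [c] := by
    simpa using (List.eq_nil_or_concat ω).resolve_left hne
  obtain ⟨⟨ω', v⟩, ⟨hω', hv, hvc, rfl⟩, -⟩ := h w c
  have hsplit : ω' ++ v ++ [c] = ω' ++ (v ++ [c]) := List.append_assoc _ _ _
  refine ⟨ω', hω', v ++ [c], ⟨hvc, fun e hvce => ?_⟩, by simp, hsplit⟩
  rw [hsplit] at hω
  simpa using h.eq_nil_of_append_mem hω' hω hvc hvce

theorem leafSubmonoid_subset [NeZero p] (h : IsTile p S Ω)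
    (hpref : ∀ v ∈ S, ∀ w : List (Fin p), w <+: v → w ∈ S) : leafSubmonoid p S ⊆ Ω := by
  intro w hw
  have hclosed : ∀ x ∈ Submonoid.closure (FreeMonoid.ofList '' leaves p S),
      ∀ ω ∈ Ω, ω ++ FreeMonoid.toList x ∈ Ω := by
    intro x hx
    induction hx using Submonoid.closure_induction with
    | mem _ hx =>
      obtain ⟨ℓ, hℓ, rfl⟩ := hx
      exact fun ω hω => h.append_mem_of_mem_leaves hpref hω hℓ
    | one => simp
    | mul x y _ _ hx hy =>
      intro ω hω
      simpa [FreeMonoid.toList_mul] using hy _ (hx ω hω)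
  simpa using hclosed (FreeMonoid.ofList w) hw [] h.nil_mem_translates

theorem subset_leafSubmonoid (h : IsTile p S Ω) : Ω ⊆ leafSubmonoid p S := by
  intro ω hω
  induction hlen : ω.length using Nat.strong_induction_on generalizing ω with
  | _ n ih =>
    rcases eq_or_ne ω [] with rfl | hne
    · exact one_mem (Submonoid.closure _)
    obtain ⟨ω', hω', ℓ, hℓ, hℓne, rfl⟩ := h.exists_eq_append_leaf hω hne
    have hshorter : ω'.length < n := by
      rw [← hlen, List.length_append]
      exact Nat.lt_add_of_pos_right (List.length_pos_iff.mpr hℓne)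
    show FreeMonoid.ofList (ω' ++ ℓ) ∈ _
    rw [FreeMonoid.ofList_append]
    exact mul_mem (ih _ hshorter hω' rfl)
      (Submonoid.subset_closure (Set.mem_image_of_mem FreeMonoid.ofList hℓ))

end IsTile

theorem tiling_translates_eq_leafSubmonoid_general (p : ℕ) [Fact p.Prime]
    (S : Set (List (Fin p)))
    (hpref : ∀ v ∈ S, ∀ w : List (Fin p), w <+: v → w ∈ S)
    (Ω : Set (List (Fin p))) (htile : IsTile p S Ω) :
    Ω = leafSubmonoid p S := by
  have : NeZero p := ⟨(Fact.out : p.Prime).ne_zero⟩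
  exact htile.subset_leafSubmonoid.antisymm (htile.leafSubmonoid_subset hpref)

/-- If `S` is a tile of a tiling of the complete `p`-ary tree with translate set `Ω`, then
`Ω` is necessarily the submonoid of the free monoid of words generated by the leaves
of `S`. -/
theorem tiling_translates_eq_leafSubmonoid (p : ℕ) [Fact p.Prime]
    (S : Set (List (Fin p))) (hfin : S.Finite) (hroot : ([] : List (Fin p)) ∈ S)
    (hpref : ∀ v ∈ S, ∀ w : List (Fin p), w <+: v → w ∈ S)
    (hnontriv : ∃ w ∈ S, w ≠ [])
    (Ω : Set (List (Fin p))) (htile : IsTile p S Ω) :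
    Ω = leafSubmonoid p S :=
  tiling_translates_eq_leafSubmonoid_general p S hpref Ω htile
end
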